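/- Let N be a nest, (E_i) pairwise orthogonal intervals of N, and P a primitive ideal of T(N) containing ker Δ where Δ(X) = Σ_i E_i X E_i. Suppose each E_i decomposes as E_i = E⁰_i + E¹_i with E⁰_i, E¹_i intervals of N. Then P contains ker Δ⁰ or ker Δ¹, where Δʲ(X) := Σ_i Eʲ_i X Eʲ_i. -/
import Mathlib


noncomputable section

universe u

variable {H : Type u} [NormedAddCommGroup H] [InnerProductSpace ℂ H] [CompleteSpace H]
  [TopologicalSpace.SeparableSpace H]

/-- A nest: a linearly ordered set of orthogonal projections containing `0` and `1`. -/
structure Nest (H : Type u) [NormedAddCommGroup H] [InnerProductSpace ℂ H]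
    [CompleteSpace H] where
  carrier : Set (H →L[ℂ] H)
  isProj : ∀ P ∈ carrier, IsSelfAdjoint P ∧ P * P = P
  zero_mem : (0 : H →L[ℂ] H) ∈ carrier
  one_mem : (1 : H →L[ℂ] H) ∈ carrier
  chain : ∀ P ∈ carrier, ∀ Q ∈ carrier, Q * P = P ∨ P * Q = Q

/-- Order on projections: `P ≤ Q` iff `ran P ⊆ ran Q`. -/
def projLE (P Q : H →L[ℂ] H) : Prop := Q * P = P

/-- Strict order on projections. -/
def projLT (P Q : H →L[ℂ] H) : Prop := projLE P Q ∧ P ≠ Q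

/-- The nest algebra: all bounded operators leaving invariant the range of every
projection in the nest, i.e. `(1 - P) X P = 0` for every `P` in the nest. -/
def nestAlgebra (𝒩 : Nest H) : Subalgebra ℂ (H →L[ℂ] H) where
  carrier := {X | ∀ P ∈ 𝒩.carrier, (1 - P) * X * P = 0}
  mul_mem' := by
    intro X Y hX hY P hP
    have hX' := hX P hP
    have hY' := hY P hP
    have hYP : Y * P = P * (Y * P) := by
      have h : (1 - P) * Y * P + P * Y * P = Y * P := by noncomm_ring
      rw [hY', zero_add] at h
      rw [← mul_assoc]; exact h.symm
    calc (1 - P) * (X * Y) * P = (1 - P) * X * (Y * P) := by noncomm_ring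
      _ = (1 - P) * X * (P * (Y * P)) := by rw [← hYP]
      _ = ((1 - P) * X * P) * (Y * P) := by noncomm_ring
      _ = 0 := by rw [hX', zero_mul]
  one_mem' := by
    intro P hP
    have h := (𝒩.isProj P hP).2
    calc (1 - P) * 1 * P = P - P * P := by noncomm_ring
      _ = 0 := by rw [h, sub_self]
  add_mem' := by
    intro X Y hX hY P hP
    have hX' := hX P hP
    have hY' := hY P hP
    calc (1 - P) * (X + Y) * P = (1 - P) * X * P + (1 - P) * Y * P := by noncomm_ring
      _ = 0 := by rw [hX', hY', add_zero]
  zero_mem' := by intro P hP; simp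
  algebraMap_mem' := by
    intro c P hP
    have h := (𝒩.isProj P hP).2
    have h1 : (1 - P) * 1 * P = 0 := by
      calc (1 - P) * 1 * P = P - P * P := by noncomm_ring
        _ = 0 := by rw [h, sub_self]
    calc (1 - P) * (algebraMap ℂ (H →L[ℂ] H) c) * P
        = (1 - P) * (c • (1 : H →L[ℂ] H)) * P := by rw [Algebra.algebraMap_eq_smul_one]
      _ = c • ((1 - P) * 1 * P) := by rw [mul_smul_comm, smul_mul_assoc]
      _ = 0 := by rw [h1, smul_zero]

/-- A (left) primitive ideal of a unital ring: the kernel of the left regular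
representation on the quotient by a maximal left ideal, i.e. the largest two-sided
ideal `{x | x·R ⊆ L}` contained in a maximal left ideal `L`. -/
def IsLeftPrimitive (R : Type*) [Ring R] (P : Set R) : Prop :=
  ∃ L : Ideal R, L.IsMaximal ∧ P = {x : R | ∀ r : R, x * r ∈ L}

/-- An interval of the nest: a difference `N - M` of nest projections `M ≤ N`. -/
def IsIntervalOf (𝒩 : Nest H) (E : H →L[ℂ] H) : Prop :=
  ∃ M ∈ 𝒩.carrier, ∃ N ∈ 𝒩.carrier, projLE M N ∧ E = N - M

/-- The kernel of the block-diagonal expectation `Δ_σ(X) = Σ_{i ∈ σ} E_i X E_i`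
(for pairwise orthogonal intervals `E_i`, `Δ_σ(X) = 0` iff every block
`E_i X E_i` with `i ∈ σ` vanishes). -/
def kerDelta (𝒩 : Nest H) (E : ℕ → H →L[ℂ] H) (σ : Set ℕ) :
    Set (nestAlgebra 𝒩) :=
  {X | ∀ i ∈ σ, E i * (X : H →L[ℂ] H) * E i = 0}

/-- Primitive ideals are prime (for two elements). -/
lemma prime_of_leftPrimitive {R : Type*} [Ring R] {P : Set R} (hP : IsLeftPrimitive R P)
    {a b : R} (h : ∀ r : R, a * r * b ∈ P) : a ∈ P ∨ b ∈ P := by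
  obtain ⟨L, hL, rfl⟩ := hP
  by_cases hb : b ∈ {x : R | ∀ r, x * r ∈ L}
  · exact Or.inr hb
  · left
    simp only [Set.mem_setOf_eq, not_forall] at hb
    obtain ⟨s, hs⟩ := hb
    intro r
    have htop : L ⊔ Ideal.span {b * s} = ⊤ := by
      by_contra hne
      have heq := hL.eq_of_le hne le_sup_left
      exact hs (heq ▸ Submodule.mem_sup_right (Ideal.subset_span (Set.mem_singleton _)))
    have h1 : (1 : R) ∈ L ⊔ Ideal.span {b * s} := htop ▸ Submodule.mem_top
    obtain ⟨y, hy, z, hz, hyz⟩ := Submodule.mem_sup.mp h1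
    obtain ⟨t, ht⟩ := Submodule.mem_span_singleton.mp hz
    have key : a * r = a * r * y + (a * (r * t) * b) * s := by
      calc a * r = a * r * (y + z) := by rw [hyz, mul_one]
        _ = a * r * y + a * r * z := by rw [mul_add]
        _ = a * r * y + a * r * (t * (b * s)) := by rw [← ht, smul_eq_mul]
        _ = a * r * y + (a * (r * t) * b) * s := by noncomm_ring
    rw [key]
    exact L.add_mem (Ideal.mul_mem_left L (a * r) hy) ((h (r * t)) s)

/-- Nest projections commute. -/
lemma nest_comm (𝒩 : Nest H) {P Q : H →L[ℂ] H} (hP : P ∈ 𝒩.carrier) (hQ : Q ∈ 𝒩.carrier) :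
    P * Q = Q * P := by
  have hPs := (𝒩.isProj P hP).1.star_eq
  have hQs := (𝒩.isProj Q hQ).1.star_eq
  rcases 𝒩.chain P hP Q hQ with h | h
  · have h2 : P * Q = P := by
      have h3 := congrArg star h
      rwa [star_mul, hPs, hQs] at h3
    rw [h, h2]
  · have h2 : Q * P = Q := by
      have h3 := congrArg star h
      rwa [star_mul, hPs, hQs] at h3
    rw [h, h2]

/-- Intervals are idempotent. -/
lemma interval_idem (𝒩 : Nest H) {F : H →L[ℂ] H} (hF : IsIntervalOf 𝒩 F) : F * F = F := by
  obtain ⟨M, hM, N, hN, hMN, rfl⟩ := hF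
  have hNN := (𝒩.isProj N hN).2
  have hMM := (𝒩.isProj M hM).2
  have hMN' : M * N = M := by
    have h3 := congrArg star (hMN : N * M = M)
    rwa [star_mul, (𝒩.isProj M hM).1.star_eq, (𝒩.isProj N hN).1.star_eq] at h3
  calc (N - M) * (N - M) = N * N - N * M - M * N + M * M := by noncomm_ring
    _ = N - M := by rw [hNN, hMM, hMN, hMN']; abel

/-- Compression by an interval is multiplicative on the nest algebra. -/
lemma interval_mult (𝒩 : Nest H) {F X Y : H →L[ℂ] H} (hF : IsIntervalOf 𝒩 F)
    (hX : X ∈ nestAlgebra 𝒩) (hY : Y ∈ nestAlgebra 𝒩) :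
    F * (X * Y) * F = (F * X * F) * (F * Y * F) := by
  have hFF : F * F = F := interval_idem 𝒩 hF
  obtain ⟨M, hM, N, hN, hMN, hFNM⟩ := hF
  have hMM := (𝒩.isProj M hM).2
  have hXM : X * M = M * (X * M) := by
    have h := hX M hM
    have h2 : X * M - M * (X * M) = 0 := by rw [← h]; noncomm_ring
    exact sub_eq_zero.mp h2
  have hYN : Y * N = N * (Y * N) := by
    have h := hY N hN
    have h2 : Y * N - N * (Y * N) = 0 := by rw [← h]; noncomm_ring
    exact sub_eq_zero.mp h2
  have hYM : Y * M = M * (Y * M) := by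
    have h := hY M hM
    have h2 : Y * M - M * (Y * M) = 0 := by rw [← h]; noncomm_ring
    exact sub_eq_zero.mp h2
  have hFM : F * M = 0 := by rw [hFNM, sub_mul, hMN, hMM, sub_self]
  have hFXM : F * (X * M) = 0 := by
    calc F * (X * M) = F * (M * (X * M)) := by rw [← hXM]
      _ = (F * M) * (X * M) := by rw [← mul_assoc]
      _ = 0 := by rw [hFM, zero_mul]
  have hFXF : F * X * F = F * X * N := by
    calc F * X * F = F * X * N - F * (X * M) := by rw [hFNM]; noncomm_ring
      _ = F * X * N - 0 := by rw [hFXM]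
      _ = F * X * N := sub_zero _
  have hYF : N * (Y * F) = Y * F := by
    calc N * (Y * F) = N * (Y * N) - N * (M * (Y * M)) := by rw [hFNM, ← hYM]; noncomm_ring
      _ = N * (Y * N) - (N * M) * (Y * M) := by rw [← mul_assoc N M]
      _ = N * (Y * N) - M * (Y * M) := by rw [hMN]
      _ = Y * N - Y * M := by rw [← hYN, ← hYM]
      _ = Y * F := by rw [hFNM]; noncomm_ring
  calc F * (X * Y) * F = F * X * (Y * F) := by noncomm_ring
    _ = F * X * (N * (Y * F)) := by rw [hYF]
    _ = F * X * N * (Y * F) := by noncomm_ring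
    _ = F * X * F * (Y * F) := by rw [← hFXF]
    _ = F * X * (F * F) * (Y * F) := by rw [hFF]
    _ = (F * X * F) * (F * Y * F) := by noncomm_ring

/-- The upper-triangular cross compression vanishes on the nest algebra. -/
lemma cross_zero (𝒩 : Nest H) {MA NA MB NB : H →L[ℂ] H}
    (hMB : MB ∈ 𝒩.carrier) (hNB : NB ∈ 𝒩.carrier)
    (hA : projLE MA NA) (hB : projLE MB NB) (hBA : projLE NB MA) :
    ∀ X ∈ nestAlgebra 𝒩, (NA - MA) * X * (NB - MB) = 0 := by
  intro X hX
  have hXN : X * NB = NB * (X * NB) := by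
    have h := hX NB hNB
    have h2 : X * NB - NB * (X * NB) = 0 := by rw [← h]; noncomm_ring
    exact sub_eq_zero.mp h2
  have hXM : X * MB = MB * (X * MB) := by
    have h := hX MB hMB
    have h2 : X * MB - MB * (X * MB) = 0 := by rw [← h]; noncomm_ring
    exact sub_eq_zero.mp h2
  have e1 : MA * NB = NB := hBA
  have h1 : (NA - MA) * NB = 0 := by
    have e2 : NA * NB = NB := by
      calc NA * NB = NA * (MA * NB) := by rw [e1]
        _ = (NA * MA) * NB := by rw [mul_assoc]
        _ = MA * NB := by rw [hA]
        _ = NB := e1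
    rw [sub_mul, e1, e2, sub_self]
  have h2 : (NA - MA) * MB = 0 := by
    have e0 : NB * MB = MB := hB
    have e3 : MA * MB = MB := by
      calc MA * MB = MA * (NB * MB) := by rw [e0]
        _ = (MA * NB) * MB := by rw [mul_assoc]
        _ = NB * MB := by rw [hBA]
        _ = MB := e0
    have e4 : NA * MB = MB := by
      calc NA * MB = NA * (MA * MB) := by rw [e3]
        _ = (NA * MA) * MB := by rw [mul_assoc]
        _ = MA * MB := by rw [hA]
        _ = MB := e3
    rw [sub_mul, e3, e4, sub_self]
  calc (NA - MA) * X * (NB - MB)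
      = (NA - MA) * (X * NB) - (NA - MA) * (X * MB) := by noncomm_ring
    _ = (NA - MA) * (NB * (X * NB)) - (NA - MA) * (MB * (X * MB)) := by rw [← hXN, ← hXM]
    _ = ((NA - MA) * NB) * (X * NB) - ((NA - MA) * MB) * (X * MB) := by noncomm_ring
    _ = 0 := by rw [h1, h2, zero_mul, zero_mul, sub_self]

/-- Two orthogonal intervals of a nest can be oriented: one of the two cross
compressions vanishes identically on the nest algebra. -/
lemma orient (𝒩 : Nest H) {F G : H →L[ℂ] H} (hF : IsIntervalOf 𝒩 F)
    (hG : IsIntervalOf 𝒩 G) (horth : F * G = 0) :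
    (∀ X ∈ nestAlgebra 𝒩, F * X * G = 0) ∨ (∀ X ∈ nestAlgebra 𝒩, G * X * F = 0) := by
  obtain ⟨M0, hM0, N0, hN0, h0, rfl⟩ := hF
  obtain ⟨M1, hM1, N1, hN1, h1, rfl⟩ := hG
  rcases 𝒩.chain N0 hN0 M1 hM1 with hx | hx
  · exact Or.inr (cross_zero 𝒩 hM0 hN0 h1 h0 hx)
  · rcases 𝒩.chain N1 hN1 M0 hM0 with hy | hy
    · exact Or.inl (cross_zero 𝒩 hM1 hN1 h0 h1 hy)
    · have hexp : N0 * N1 - N0 * M1 - M0 * N1 + M0 * M1 = 0 := by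
        rw [← horth]; noncomm_ring
      have eNM : N0 * M1 = M1 := hx
      have eMN : M0 * N1 = M0 := by rw [nest_comm 𝒩 hM0 hN1]; exact hy
      rcases 𝒩.chain N0 hN0 N1 hN1 with hz | hz
      · have eNN : N0 * N1 = N0 := by rw [nest_comm 𝒩 hN0 hN1]; exact hz
        rcases 𝒩.chain M0 hM0 M1 hM1 with hw | hw
        · have eMM : M0 * M1 = M0 := by rw [nest_comm 𝒩 hM0 hM1]; exact hw
          rw [eNN, eNM, eMN, eMM] at hexp
          have h5 : N0 - M1 = 0 := by rw [← hexp]; abel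
          have hle : M1 * N0 = N0 := by
            have hne : N0 = M1 := sub_eq_zero.mp h5
            rw [hne]; exact (𝒩.isProj M1 hM1).2
          exact Or.inr (cross_zero 𝒩 hM0 hN0 h1 h0 hle)
        · have eMM : M0 * M1 = M1 := hw
          rw [eNN, eNM, eMN, eMM] at hexp
          have h5 : N0 - M0 = 0 := by rw [← hexp]; abel
          left; intro X _; rw [h5, zero_mul, zero_mul]
      · have eNN : N0 * N1 = N1 := hz
        rcases 𝒩.chain M0 hM0 M1 hM1 with hw | hw
        · have eMM : M0 * M1 = M0 := by rw [nest_comm 𝒩 hM0 hM1]; exact hw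
          rw [eNN, eNM, eMN, eMM] at hexp
          have h5 : N1 - M1 = 0 := by rw [← hexp]; abel
          right; intro X _; rw [h5, zero_mul, zero_mul]
        · have eMM : M0 * M1 = M1 := hw
          rw [eNN, eNM, eMN, eMM] at hexp
          have h5 : N1 - M0 = 0 := by rw [← hexp]; abel
          have hle : M0 * N1 = N1 := by
            have hne : N1 = M0 := sub_eq_zero.mp h5
            rw [hne]; exact (𝒩.isProj M0 hM0).2
          exact Or.inl (cross_zero 𝒩 hM1 hN1 h0 h1 hle)

/-- If two idempotents have idempotent sum, they are orthogonal. -/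
lemma proj_sum_orth {A B : H →L[ℂ] H} (hA : A * A = A) (hB : B * B = B)
    (hAB : (A + B) * (A + B) = A + B) : A * B = 0 ∧ B * A = 0 := by
  have h : A * B + B * A = 0 := by
    have h2 : A + B + (A * B + B * A) = A + B + 0 := by
      rw [add_zero]
      calc A + B + (A * B + B * A) = A * A + A * B + B * A + B * B := by rw [hA, hB]; abel
        _ = (A + B) * (A + B) := by noncomm_ring
        _ = A + B := hAB
    exact add_left_cancel h2
  have hL : A * B + A * B * A = 0 := by
    calc A * B + A * B * A = A * (A * B + B * A) := by
          rw [mul_add, ← mul_assoc, ← mul_assoc, hA]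
      _ = A * 0 := by rw [h]
      _ = 0 := mul_zero A
  have hR : A * B * A + B * A = 0 := by
    calc A * B * A + B * A = (A * B + B * A) * A := by
          rw [add_mul, mul_assoc B A A, hA]
      _ = 0 * A := by rw [h]
      _ = 0 := zero_mul A
  have heq : A * B = B * A := by
    have e1 : A * B = -(A * B * A) := eq_neg_of_add_eq_zero_left hL
    have e2 : B * A = -(A * B * A) := eq_neg_of_add_eq_zero_right hR
    rw [e1, e2]
  rw [← heq] at h
  have hz : A * B = 0 := by
    have h2 : (2 : ℂ) • (A * B) = 0 := by rw [two_smul]; exact h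
    calc A * B = (2 : ℂ)⁻¹ • ((2 : ℂ) • (A * B)) := by rw [smul_smul]; norm_num
      _ = 0 := by rw [h2, smul_zero]
  exact ⟨hz, heq ▸ hz⟩

set_option maxHeartbeats 1000000 in
set_option synthInstance.maxHeartbeats 400000 in
/-- let `(E_i)` be pairwise orthogonal intervals of `𝒩` and `P` a
primitive ideal of `T(𝒩)` containing `ker Δ`. If each `E_i` decomposes as a sum
`E_i = E⁰_i + E¹_i` of two intervals of `𝒩`, then `P` contains `ker Δ⁰` or `ker Δ¹`,
where `Δʲ(X) = Σ_i Eʲ_i X Eʲ_i`. -/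
theorem statement19 (𝒩 : Nest H) (E E0 E1 : ℕ → H →L[ℂ] H)
    (hE : ∀ i, IsIntervalOf 𝒩 (E i)) (horth : ∀ i j, i ≠ j → E i * E j = 0)
    (hE0 : ∀ i, IsIntervalOf 𝒩 (E0 i)) (hE1 : ∀ i, IsIntervalOf 𝒩 (E1 i))
    (hsum : ∀ i, E i = E0 i + E1 i)
    (P : Set (nestAlgebra 𝒩)) (hP : IsLeftPrimitive (nestAlgebra 𝒩) P)
    (hker : kerDelta 𝒩 E Set.univ ⊆ P) :
    kerDelta 𝒩 E0 Set.univ ⊆ P ∨ kerDelta 𝒩 E1 Set.univ ⊆ P := by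
  classical
  -- orthogonality of the two halves
  have horthFG : ∀ i, E0 i * E1 i = 0 ∧ E1 i * E0 i = 0 := fun i =>
    proj_sum_orth (interval_idem 𝒩 (hE0 i)) (interval_idem 𝒩 (hE1 i))
      (by rw [← hsum i]; exact interval_idem 𝒩 (hE i))
  -- orientation of the two halves
  have horient : ∀ i, ∃ A B : H →L[ℂ] H,
      ((A = E0 i ∧ B = E1 i) ∨ (A = E1 i ∧ B = E0 i)) ∧
      ∀ X ∈ nestAlgebra 𝒩, A * X * B = 0 := by
    intro i
    rcases orient 𝒩 (hE0 i) (hE1 i) (horthFG i).1 with hc | hc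
    · exact ⟨E0 i, E1 i, Or.inl ⟨rfl, rfl⟩, hc⟩
    · exact ⟨E1 i, E0 i, Or.inr ⟨rfl, rfl⟩, hc⟩
  choose A B hABspec hcross using horient
  have hei : ∀ i, E i = A i + B i := by
    intro i
    rcases hABspec i with ⟨ha, hb⟩ | ⟨ha, hb⟩
    · rw [hsum i, ha, hb]
    · rw [hsum i, ha, hb, add_comm]
  -- the key claim
  have claim1 : ∀ (U V : nestAlgebra 𝒩),
      (∀ i, E0 i * (U : H →L[ℂ] H) * E0 i = 0) → (∀ i, E1 i * (U : H →L[ℂ] H) * E1 i = 0) →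
      (∀ i, E0 i * (V : H →L[ℂ] H) * E0 i = 0) → (∀ i, E1 i * (V : H →L[ℂ] H) * E1 i = 0) →
      ∀ r : nestAlgebra 𝒩, (U * r * V) ∈ kerDelta 𝒩 E Set.univ := by
    intro U V hU0 hU1 hV0 hV1 r i _
    obtain ⟨haa, hbb, hUb, hVa⟩ : (A i * A i = A i) ∧ (B i * B i = B i) ∧
        (B i * (U : H →L[ℂ] H) * B i = 0) ∧ (A i * (V : H →L[ℂ] H) * A i = 0) := by
      rcases hABspec i with ⟨ha, hb⟩ | ⟨ha, hb⟩ <;> rw [ha, hb]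
      · exact ⟨interval_idem 𝒩 (hE0 i), interval_idem 𝒩 (hE1 i), hU1 i, hV0 i⟩
      · exact ⟨interval_idem 𝒩 (hE1 i), interval_idem 𝒩 (hE0 i), hU0 i, hV1 i⟩
    obtain ⟨hab, hbb'⟩ : A i * B i = 0 ∧ B i * A i = 0 := by
      rcases hABspec i with ⟨ha, hb⟩ | ⟨ha, hb⟩ <;> rw [ha, hb]
      · exact horthFG i
      · exact ⟨(horthFG i).2, (horthFG i).1⟩
    have haUb : A i * (U : H →L[ℂ] H) * B i = 0 := hcross i (U : H →L[ℂ] H) U.2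
    have haVb : A i * (V : H →L[ℂ] H) * B i = 0 := hcross i (V : H →L[ℂ] H) V.2
    have harb : A i * (r : H →L[ℂ] H) * B i = 0 := hcross i (r : H →L[ℂ] H) r.2
    have m1 : E i * ((U : H →L[ℂ] H) * ((r : H →L[ℂ] H) * (V : H →L[ℂ] H))) * E i = (E i * (U : H →L[ℂ] H) * E i) * (E i * ((r : H →L[ℂ] H) * (V : H →L[ℂ] H)) * E i) :=
      interval_mult 𝒩 (hE i) U.2 (mul_mem r.2 V.2)
    have m2 : E i * ((r : H →L[ℂ] H) * (V : H →L[ℂ] H)) * E i = (E i * (r : H →L[ℂ] H) * E i) * (E i * (V : H →L[ℂ] H) * E i) :=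
      interval_mult 𝒩 (hE i) r.2 V.2
    have eUe : E i * (U : H →L[ℂ] H) * E i = E i * (U : H →L[ℂ] H) * A i := by
      have h' : E i * (U : H →L[ℂ] H) * E i = E i * (U : H →L[ℂ] H) * A i + (A i * (U : H →L[ℂ] H) * B i + B i * (U : H →L[ℂ] H) * B i) := by
        rw [hei i]; noncomm_ring
      rw [h', haUb, hUb, add_zero, add_zero]
    have eVe : E i * (V : H →L[ℂ] H) * E i = B i * (V : H →L[ℂ] H) * E i := by
      have h' : E i * (V : H →L[ℂ] H) * E i = B i * (V : H →L[ℂ] H) * E i + (A i * (V : H →L[ℂ] H) * A i + A i * (V : H →L[ℂ] H) * B i) := by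
        rw [hei i]; noncomm_ring
      rw [h', hVa, haVb, add_zero, add_zero]
    have hmid : A i * (E i * (r : H →L[ℂ] H) * E i) * B i = A i * (r : H →L[ℂ] H) * B i := by
      have h1 : A i * E i = A i := by rw [hei i, mul_add, haa, hab, add_zero]
      have h2 : E i * B i = B i := by rw [hei i, add_mul, hab, hbb, zero_add]
      calc A i * (E i * (r : H →L[ℂ] H) * E i) * B i = (A i * E i) * (r : H →L[ℂ] H) * (E i * B i) := by noncomm_ring
        _ = A i * (r : H →L[ℂ] H) * B i := by rw [h1, h2]
    show E i * ((U * r * V : nestAlgebra 𝒩) : H →L[ℂ] H) * E i = 0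
    simp only [MulMemClass.coe_mul]
    calc E i * ((U : H →L[ℂ] H) * (r : H →L[ℂ] H) * (V : H →L[ℂ] H)) * E i
        = E i * ((U : H →L[ℂ] H) * ((r : H →L[ℂ] H) * (V : H →L[ℂ] H))) * E i := by rw [mul_assoc (U : H →L[ℂ] H) (r : H →L[ℂ] H) (V : H →L[ℂ] H)]
      _ = (E i * (U : H →L[ℂ] H) * E i) * ((E i * (r : H →L[ℂ] H) * E i) * (E i * (V : H →L[ℂ] H) * E i)) := by rw [m1, m2]
      _ = (E i * (U : H →L[ℂ] H) * A i) * ((E i * (r : H →L[ℂ] H) * E i) * (B i * (V : H →L[ℂ] H) * E i)) := by rw [eUe, eVe]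
      _ = (E i * (U : H →L[ℂ] H)) * (A i * (E i * (r : H →L[ℂ] H) * E i) * B i) * ((V : H →L[ℂ] H) * E i) := by noncomm_ring
      _ = (E i * (U : H →L[ℂ] H)) * (A i * (r : H →L[ℂ] H) * B i) * ((V : H →L[ℂ] H) * E i) := by rw [hmid]
      _ = 0 := by rw [harb, mul_zero, zero_mul]
  -- elements in both kernels lie in P
  have hKP : ∀ (U : nestAlgebra 𝒩),
      (∀ i, E0 i * (U : H →L[ℂ] H) * E0 i = 0) → (∀ i, E1 i * (U : H →L[ℂ] H) * E1 i = 0) →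
      U ∈ P := by
    intro U hU0 hU1
    have h := prime_of_leftPrimitive hP (a := U) (b := U)
      (fun r => hker (claim1 U U hU0 hU1 hU0 hU1 r))
    exact h.elim id id
  by_contra hcon
  push_neg at hcon
  obtain ⟨h0, h1⟩ := hcon
  obtain ⟨X0, hX0K, hX0P⟩ := Set.not_subset.mp h0
  obtain ⟨X1, hX1K, hX1P⟩ := Set.not_subset.mp h1
  have hfinal : ∀ r : nestAlgebra 𝒩, X0 * r * X1 ∈ P := by
    intro r
    apply hKP
    · intro i
      simp only [MulMemClass.coe_mul]
      rw [mul_assoc (X0 : H →L[ℂ] H)]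
      rw [interval_mult 𝒩 (hE0 i) X0.2 (mul_mem r.2 X1.2),
        hX0K i (Set.mem_univ i), zero_mul]
    · intro i
      simp only [MulMemClass.coe_mul]
      rw [interval_mult 𝒩 (hE1 i) (mul_mem X0.2 r.2) X1.2,
        hX1K i (Set.mem_univ i), mul_zero]
  rcases prime_of_leftPrimitive hP hfinal with h | h
  · exact hX0P h
  · exact hX1P h
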